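/- The FEC algorithm does not solve Convergence under the SSYNC scheduler: there exists an infinite fair SSYNC schedule under which neither robot ever moves, so the inter-robot distance stays equal to its initial nonzero value. -/
import Mathlib

inductive RColor | Black | White
deriving DecidableEq

/-- Look-Compute outcome of the FEC algorithm: given own color and observed
color, return the new color and whether to move to the midpoint. -/
def fecLC : RColor → RColor → RColor × Bool
  | RColor.White, RColor.White => (RColor.Black, true)
  | RColor.White, RColor.Black => (RColor.White, false)
  | RColor.Black, RColor.Black => (RColor.White, false)
  | RColor.Black, RColor.White => (RColor.Black, false)

/-- SSYNC configurations: position and color of each robot. -/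
abbrev SConfig :=
  (EuclideanSpace ℝ (Fin 2) × RColor) × (EuclideanSpace ℝ (Fin 2) × RColor)

/-- One SSYNC round of FEC: the activated robots (a nonempty subset, encoded by
a pair of Booleans) perform a full atomic Look-Compute-Move cycle, all
snapshots being taken in the configuration at the start of the round. -/
noncomputable def fecSSyncStep (a : Bool × Bool) (c : SConfig) : SConfig :=
  ((if a.1 then
      ((if (fecLC c.1.2 c.2.2).2 then midpoint ℝ c.1.1 c.2.1 else c.1.1),
        (fecLC c.1.2 c.2.2).1)
    else c.1),
   (if a.2 then
      ((if (fecLC c.2.2 c.1.2).2 then midpoint ℝ c.2.1 c.1.1 else c.2.1),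
        (fecLC c.2.2 c.1.2).1)
    else c.2))

/-- FEC does not solve Convergence under SSYNC: for adversarially
chosen initial colors there is an infinite fair SSYNC schedule (a nonempty set
of robots activated each round, each robot activated infinitely often) under
which neither robot ever moves, so the inter-robot distance stays equal to its
initial nonzero value. -/
theorem fec_no_convergence_ssync
    (p q : EuclideanSpace ℝ (Fin 2)) (hpq : p ≠ q) :
    ∃ (col₁ col₂ : RColor) (sched : ℕ → Bool × Bool) (c : ℕ → SConfig),
      (∀ n, sched n ≠ (false, false)) ∧
      (∀ N, ∃ n ≥ N, (sched n).1 = true) ∧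
      (∀ N, ∃ n ≥ N, (sched n).2 = true) ∧
      c 0 = ((p, col₁), (q, col₂)) ∧
      (∀ n, c (n + 1) = fecSSyncStep (sched n) (c n)) ∧
      (∀ n, (c n).1.1 = p ∧ (c n).2.1 = q) ∧
      (∀ n, dist ((c n).1.1) ((c n).2.1) = dist p q ∧ dist p q ≠ 0) := by
  refine ⟨RColor.White, RColor.Black, fun _ => (true, true),
    fun _ => ((p, RColor.White), (q, RColor.Black)), ?_, ?_, ?_, rfl, ?_, ?_, ?_⟩
  · intro n h; simp at h
  · intro N; exact ⟨N, le_refl N, rfl⟩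
  · intro N; exact ⟨N, le_refl N, rfl⟩
  · intro n; simp [fecSSyncStep, fecLC]
  · intro n; exact ⟨rfl, rfl⟩
  · intro n; exact ⟨rfl, dist_ne_zero.mpr hpq⟩
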